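/- Let 0 < ε < 2/3 and set c(ε) = (2π²ε)^{−2/3}. The maximal solution (α, β) of the system (case aμ = 1) with initial conditions α(0) = √(c(ε))·ε and β(0) = √(c(ε)), defined on [0, t_max) with t_max ∈ (0, ∞], satisfies α(t) → 0 and β(t) → ∞ as t → t_max. (This is the ODE content of Theorem 2 in the case aμ = 1 with ε < 2/3: starting too far from the round metric, the normalized flow does not return to it.) -/

import Mathlib

/-!
The quantity `α β²` is conserved, so with `C = α(0) β(0)² = ε β(0)³` the component `β`
solves the scalar equation `β' = (β³ - C)(2β³ - 3C) / (24 β⁷)`. Since `ε < 2/3` the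
right-hand side is positive at `β(0)`, so `β` never drops below `β(0)`; from then on `(β²)'`
is pinched between the positive constants `(1 - ε)(2 - 3ε)/12` and `1/6`. Hence `β` is
increasing and bounded on bounded time intervals: a finite `t_max` would give a limit point
with `β ≠ 0`, from which local existence for the `C¹` vector field continues the solution,
contradicting maximality. So `t_max = ∞`, `β²` grows at least linearly, and `α = C / β² → 0`.
-/

open Real Filter Set Topology
open scoped ENNReal

/-- The vector field of the volume-normalized spinor-flow system on Berger spheres
in the case `aμ = 1`. -/
noncomputable def G1 (x y : ℝ) : ℝ × ℝ :=
  (-(1/4) * x^3 / y^4 + (5/12) * x^2 / y^3 - (1/6) * x / y^2,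
   (1/8) * x^2 / y^3 - (5/24) * x / y^2 + (1/12) * (1/y))
/-- `(α, β)` is a solution of the normalized system (case `aμ = 1`) on `J`. -/
def IsSolutionOn (α β : ℝ → ℝ) (J : Set ℝ) : Prop :=
  ∀ t ∈ J, β t ≠ 0 ∧
    HasDerivAt α (G1 (α t) (β t)).1 t ∧
    HasDerivAt β (G1 (α t) (β t)).2 t

/-- The interval `[0, T)` as a subset of `ℝ`, where `T ∈ (0,∞]`. -/
def domainUpTo (T : ℝ≥0∞) : Set ℝ := {t : ℝ | 0 ≤ t ∧ ENNReal.ofReal t < T}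

/-- `(α, β)` is a maximal solution on `[0, T)`: it is a solution there and cannot be
extended to a solution on a strictly larger interval to the right. -/
def IsMaxSolution (α β : ℝ → ℝ) (T : ℝ≥0∞) : Prop :=
  0 < T ∧ IsSolutionOn α β (domainUpTo T) ∧
    ¬ ∃ (T' : ℝ≥0∞) (α' β' : ℝ → ℝ), T < T' ∧ IsSolutionOn α' β' (domainUpTo T') ∧
        ∀ t ∈ domainUpTo T, α' t = α t ∧ β' t = β t

/-- The filter of approach to the right endpoint of `[0, T)`: `atTop` if `T = ∞`,
and the left-neighborhood filter of `T` otherwise. -/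
noncomputable def endFilter (T : ℝ≥0∞) : Filter ℝ :=
  if T = ⊤ then atTop else 𝓝[<] T.toReal

theorem hasDerivWithinAt_Iic_of_forall_hasDerivAt_of_tendsto {E : Type*}
    [NormedAddCommGroup E] [NormedSpace ℝ E] {f : E → E} {γ : ℝ → E} {a τ : ℝ} (haτ : a < τ)
    (hf : ContinuousAt f (γ τ))
    (hγ : ∀ t ∈ Ioo a τ, HasDerivAt γ (f (γ t)) t)
    (hlim : Tendsto γ (𝓝[<] τ) (𝓝 (γ τ))) :
    HasDerivWithinAt γ (f (γ τ)) (Iic τ) τ := by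
  have hs : Ioo a τ ∈ 𝓝[<] τ := Ioo_mem_nhdsLT haτ
  refine hasDerivWithinAt_Iic_of_tendsto_deriv
    (fun t ht ↦ (hγ t ht).differentiableAt.differentiableWithinAt)
    (hlim.mono_left (nhdsWithin_mono _ Ioo_subset_Iio_self)) hs ?_
  refine (hf.tendsto.comp hlim).congr' ?_
  filter_upwards [hs] with t ht using (hγ t ht).deriv.symm

theorem exists_hasDerivAt_extension_of_tendsto {E : Type*} [NormedAddCommGroup E]
    [NormedSpace ℝ E] [CompleteSpace E] {f : E → E} {U : Set E} {p : E} {γ : ℝ → E} {a τ : ℝ}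
    (hU : IsOpen U) (hpU : p ∈ U) (hf : ContDiffAt ℝ 1 f p) (haτ : a < τ)
    (hγ : ∀ t ∈ Ico a τ, HasDerivAt γ (f (γ t)) t ∧ γ t ∈ U)
    (hlim : Tendsto γ (𝓝[<] τ) (𝓝 p)) :
    ∃ τ' > τ, ∃ η : ℝ → E, EqOn η γ (Ico a τ) ∧
      ∀ t ∈ Ico a τ', HasDerivAt η (f (η t)) t ∧ η t ∈ U := by
  obtain ⟨ξ, hξτ, δ, hδ, hξ⟩ :=
    hf.exists_forall_mem_closedBall_exists_eq_forall_mem_Ioo_hasDerivAt₀ τ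
  have hξU : ∀ᶠ t in 𝓝[≥] τ, HasDerivAt ξ (f (ξ t)) t ∧ ξ t ∈ U := by
    have hdom : ∀ᶠ t in 𝓝 τ, t ∈ Ioo (τ - δ) (τ + δ) :=
      Ioo_mem_nhds (by linarith) (by linarith)
    have hmem : ∀ᶠ t in 𝓝 τ, ξ t ∈ U :=
      (hξ τ hdom.self_of_nhds).continuousAt.preimage_mem_nhds (hU.mem_nhds (hξτ ▸ hpU))
    exact nhdsWithin_le_nhds ((hdom.and hmem).mono fun t ht ↦ ⟨hξ t ht.1, ht.2⟩)
  obtain ⟨τ', hττ', hτ'⟩ := mem_nhdsGE_iff_exists_Ico_subset.mp hξU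
  -- Glue `γ` to the local solution `ξ` through `p`; only the one-sided derivatives at `τ` have
  -- to match, so no uniqueness theorem is needed.
  let η : ℝ → E := fun t ↦ if t < τ then γ t else ξ t
  have hηγ : EqOn η γ (Iio τ) := fun t ht ↦ if_pos ht
  have hηξ : EqOn η ξ (Ici τ) := fun t ht ↦ if_neg (not_lt.mpr ht)
  have hbefore : ∀ t ∈ Ico a τ, HasDerivAt η (f (η t)) t ∧ η t ∈ U := fun t ht ↦ by
    rw [hηγ ht.2]
    exact ⟨(hγ t ht).1.congr_of_eventuallyEq (hηγ.eventuallyEq_of_mem (Iio_mem_nhds ht.2)),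
      (hγ t ht).2⟩
  have hητ : η τ = p := (hηξ self_mem_Ici).trans hξτ
  have hat : HasDerivAt η (f p) τ := by
    have hleft : HasDerivWithinAt η (f p) (Iic τ) τ := by
      refine hητ ▸ hasDerivWithinAt_Iic_of_forall_hasDerivAt_of_tendsto haτ
        (hητ ▸ hf.continuousAt) (fun t ht ↦ (hbefore t (Ioo_subset_Ico_self ht)).1) ?_
      exact hητ ▸ hlim.congr' (hηγ.eventuallyEq_of_mem self_mem_nhdsWithin).symm
    have hright : HasDerivWithinAt η (f p) (Ici τ) τ :=
      (hξτ ▸ (hτ' ⟨le_rfl, hττ'⟩).1.hasDerivWithinAt).congr (fun t ht ↦ hηξ ht)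
        (hηξ self_mem_Ici)
    simpa only [Iic_union_Ici, hasDerivWithinAt_univ] using hleft.union hright
  refine ⟨τ', hττ', η, fun t ht ↦ hηγ ht.2, fun t ht ↦ ?_⟩
  rcases lt_trichotomy t τ with htτ | rfl | hτt
  · exact hbefore t ⟨ht.1, htτ⟩
  · exact hητ ▸ ⟨hat, hpU⟩
  · have h := hτ' ⟨hτt.le, ht.2⟩
    rw [hηξ hτt.le]
    exact ⟨h.1.congr_of_eventuallyEq (hηξ.eventuallyEq_of_mem (Ici_mem_nhds hτt)), h.2⟩

lemma domainUpTo_of_ne_top {T : ℝ≥0∞} (hT : T ≠ ⊤) : domainUpTo T = Ico 0 T.toReal := by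
  ext t
  exact and_congr_right fun ht ↦ ENNReal.ofReal_lt_iff_lt_toReal ht hT

lemma domainUpTo_top : domainUpTo ⊤ = Ici 0 := by
  ext t
  simp [domainUpTo]

lemma convex_domainUpTo (T : ℝ≥0∞) : Convex ℝ (domainUpTo T) := by
  by_cases hT : T = ⊤
  · rw [hT, domainUpTo_top]; exact convex_Ici 0
  · rw [domainUpTo_of_ne_top hT]; exact convex_Ico 0 _

lemma isLeast_domainUpTo {T : ℝ≥0∞} (hT : 0 < T) : IsLeast (domainUpTo T) 0 :=
  ⟨⟨le_rfl, by simpa using hT⟩, fun _ ht ↦ ht.1⟩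

lemma isSolutionOn_iff {α β : ℝ → ℝ} {J : Set ℝ} :
    IsSolutionOn α β J ↔ ∀ t ∈ J,
      HasDerivAt (fun s ↦ (α s, β s)) (G1.uncurry (α t, β t)) t ∧
        (α t, β t) ∈ {q : ℝ × ℝ | q.2 ≠ 0} := by
  refine forall₂_congr fun t _ ↦
    ⟨fun ⟨hβ, hα', hβ'⟩ ↦ ⟨hα'.prodMk hβ', hβ⟩, fun ⟨h, hβ⟩ ↦ ⟨hβ, ?_, ?_⟩⟩
  · exact hasFDerivAt_fst.comp_hasDerivAt t h
  · exact hasFDerivAt_snd.comp_hasDerivAt t h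

lemma contDiffAt_uncurry_G1 {q : ℝ × ℝ} (hq : q.2 ≠ 0) : ContDiffAt ℝ 1 G1.uncurry q := by
  unfold G1 Function.uncurry
  fun_prop (disch := positivity)

lemma IsMaxSolution.not_tendsto_of_ne_top {α β : ℝ → ℝ} {T : ℝ≥0∞}
    (hmax : IsMaxSolution α β T) (hT : T ≠ ⊤) {p : ℝ × ℝ} (hp : p.2 ≠ 0) :
    ¬ Tendsto (fun t ↦ (α t, β t)) (𝓝[<] T.toReal) (𝓝 p) := by
  intro hlim
  obtain ⟨hT0, hsol, hno_ext⟩ := hmax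
  rw [isSolutionOn_iff, domainUpTo_of_ne_top hT] at hsol
  obtain ⟨τ', hτ', η, hηeq, hη⟩ := exists_hasDerivAt_extension_of_tendsto
    (isOpen_ne_fun continuous_snd continuous_const) hp (contDiffAt_uncurry_G1 hp)
    (ENNReal.toReal_pos hT0.ne' hT) hsol hlim
  have hτ'0 : 0 ≤ τ' := (ENNReal.toReal_nonneg).trans hτ'.le
  refine hno_ext ⟨ENNReal.ofReal τ', fun t ↦ (η t).1, fun t ↦ (η t).2, ?_, ?_, ?_⟩
  · exact (ENNReal.lt_ofReal_iff_toReal_lt hT).mpr hτ'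
  · rwa [isSolutionOn_iff, domainUpTo_of_ne_top ENNReal.ofReal_ne_top,
      ENNReal.toReal_ofReal hτ'0]
  · intro t ht
    rw [domainUpTo_of_ne_top hT] at ht
    exact Prod.ext_iff.mp (hηeq ht)

/-- On the level set `α β² = C` of the conserved quantity, the `β`-equation reads
`β' = reducedField C β`. -/
noncomputable def reducedField (C y : ℝ) : ℝ := (y ^ 3 - C) * (2 * y ^ 3 - 3 * C) / (24 * y ^ 7)

lemma G1_snd_div_sq (C : ℝ) {y : ℝ} (hy : y ≠ 0) : (G1 (C / y ^ 2) y).2 = reducedField C y := by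
  simp only [G1, reducedField]
  field_simp
  ring

lemma reducedField_pos {C y : ℝ} (hC : 0 ≤ C) (hy : 0 < y) (h : 3 * C < 2 * y ^ 3) :
    0 < reducedField C y :=
  div_pos (mul_pos (by linarith) (by linarith)) (by positivity)

lemma two_mul_mul_reducedField_mem_Icc {C y ε : ℝ} (hC : 0 ≤ C) (hy : 0 < y) (hε : ε < 2 / 3)
    (hCy : C ≤ ε * y ^ 3) :
    2 * y * reducedField C y ∈ Icc ((1 - ε) * (2 - 3 * ε) / 12) (1 / 6) := by
  have hy3 : 0 < y ^ 3 := by positivity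
  -- With `ρ = C / y³ ∈ [0, ε]` the quantity is `(1 - ρ) (2 - 3ρ) / 12`.
  have h : 2 * y * reducedField C y =
      (y ^ 3 - C) * (2 * y ^ 3 - 3 * C) / (12 * (y ^ 3) ^ 2) := by
    simp only [reducedField]; field_simp; ring
  rw [h, mem_Icc, div_le_div_iff₀ (by norm_num) (by positivity),
    div_le_div_iff₀ (by positivity) (by norm_num)]
  constructor
  · have h5 : 0 ≤ 5 * y ^ 3 - 3 * (ε * y ^ 3) - 3 * C := by nlinarith
    nlinarith [mul_nonneg (sub_nonneg.mpr hCy) h5]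
  · nlinarith [mul_nonneg hC (by nlinarith : 0 ≤ 5 * y ^ 3 - 3 * C)]

section Reduction

variable {α β : ℝ → ℝ} {J : Set ℝ}

lemma IsSolutionOn.mul_sq_eq (hsol : IsSolutionOn α β J) (hJ : Convex ℝ J) {s t : ℝ}
    (hs : s ∈ J) (ht : t ∈ J) : α t * β t ^ 2 = α s * β s ^ 2 := by
  have hderiv : ∀ x ∈ J, HasDerivWithinAt (fun x ↦ α x * β x ^ 2) 0 J x := fun x hx ↦ by
    obtain ⟨hβ, hα', hβ'⟩ := hsol x hx
    refine ((hα'.fun_mul (hβ'.fun_pow 2)).congr_deriv ?_).hasDerivWithinAt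
    simp only [G1]
    field_simp
    ring
  simpa [sub_eq_zero] using
    hJ.norm_image_sub_le_of_norm_hasDerivWithin_le hderiv (fun _ _ ↦ norm_zero.le) hs ht

lemma IsSolutionOn.eq_div_sq (hsol : IsSolutionOn α β J) (hJ : Convex ℝ J) {s t : ℝ}
    (hs : s ∈ J) (ht : t ∈ J) : α t = α s * β s ^ 2 / β t ^ 2 :=
  eq_div_of_mul_eq (pow_ne_zero 2 (hsol t ht).1) (hsol.mul_sq_eq hJ hs ht)

lemma IsSolutionOn.hasDerivAt_reducedField (hsol : IsSolutionOn α β J) (hJ : Convex ℝ J)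
    {s : ℝ} (hs : s ∈ J) {t : ℝ} (ht : t ∈ J) :
    HasDerivAt β (reducedField (α s * β s ^ 2) (β t)) t := by
  rw [← G1_snd_div_sq _ (hsol t ht).1, ← hsol.eq_div_sq hJ hs ht]
  exact (hsol t ht).2.2

end Reduction

section ReducedEquation

variable {b : ℝ → ℝ} {J : Set ℝ} {C : ℝ}

lemma le_of_hasDerivAt_reducedField (hJ : Convex ℝ J) (h0 : IsLeast J 0)
    (hb : ∀ t ∈ J, HasDerivAt b (reducedField C (b t)) t) (hC : 0 ≤ C) (hb0 : 0 < b 0)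
    (hCb0 : 3 * C < 2 * b 0 ^ 3) {t : ℝ} (ht : t ∈ J) : b 0 ≤ b t := by
  have hsub : Icc 0 t ⊆ J := hJ.ordConnected.out h0.1 ht
  have hbarrier := image_le_of_deriv_right_lt_deriv_boundary' (f := fun s ↦ -b s)
    (f' := fun s ↦ -reducedField C (b s)) (B := fun _ ↦ -b 0) (B' := 0)
    (fun s hs ↦ (hb s (hsub hs)).continuousAt.neg.continuousWithinAt)
    (fun s hs ↦ (hb s (hsub (Ico_subset_Icc_self hs))).neg.hasDerivWithinAt)
    le_rfl continuousOn_const (fun _ _ ↦ hasDerivWithinAt_const _ _ _)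
    (fun s _ hs ↦ neg_neg_of_pos (neg_inj.mp hs ▸ reducedField_pos hC hb0 hCb0))
    (right_mem_Icc.mpr (h0.2 ht))
  exact neg_le_neg_iff.mp hbarrier

lemma sq_growth_of_hasDerivAt_reducedField (hJ : Convex ℝ J) (h0 : IsLeast J 0)
    (hb : ∀ t ∈ J, HasDerivAt b (reducedField C (b t)) t) (hC : 0 ≤ C) (hb0 : 0 < b 0)
    {ε : ℝ} (hε : ε < 2 / 3) (hCε : C ≤ ε * b 0 ^ 3) {s t : ℝ} (hs : s ∈ J) (ht : t ∈ J)
    (hst : s ≤ t) :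
    (1 - ε) * (2 - 3 * ε) / 12 * (t - s) ≤ b t ^ 2 - b s ^ 2 ∧
      b t ^ 2 - b s ^ 2 ≤ 1 / 6 * (t - s) := by
  have hε0 : 0 ≤ ε := nonneg_of_mul_nonneg_left (hC.trans hCε) (by positivity)
  have hlow : ∀ x ∈ J, b 0 ≤ b x := fun x hx ↦
    le_of_hasDerivAt_reducedField hJ h0 hb hC hb0 (by nlinarith [pow_pos hb0 3]) hx
  have hsq : ∀ x ∈ J, HasDerivAt (fun x ↦ b x ^ 2) (2 * b x * reducedField C (b x)) x :=
    fun x hx ↦ ((hb x hx).fun_pow 2).congr_deriv (by ring)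
  have hbound : ∀ x ∈ J, 2 * b x * reducedField C (b x) ∈
      Icc ((1 - ε) * (2 - 3 * ε) / 12) (1 / 6) := fun x hx ↦ by
    have hbx := hlow x hx
    refine two_mul_mul_reducedField_mem_Icc hC (hb0.trans_le hbx) hε (hCε.trans ?_)
    gcongr
  have hcont : ContinuousOn (fun x ↦ b x ^ 2) J := fun x hx ↦
    (hsq x hx).continuousAt.continuousWithinAt
  have hdiff : DifferentiableOn ℝ (fun x ↦ b x ^ 2) (interior J) := fun x hx ↦
    (hsq x (interior_subset hx)).differentiableAt.differentiableWithinAt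
  have hderiv : ∀ x ∈ interior J, deriv (fun x ↦ b x ^ 2) x ∈
      Icc ((1 - ε) * (2 - 3 * ε) / 12) (1 / 6) := fun x hx ↦
    (hsq x (interior_subset hx)).deriv ▸ hbound x (interior_subset hx)
  exact ⟨hJ.mul_sub_le_image_sub_of_le_deriv hcont hdiff (fun x hx ↦ (hderiv x hx).1)
      s hs t ht hst,
    hJ.image_sub_le_mul_sub_of_deriv_le hcont hdiff (fun x hx ↦ (hderiv x hx).2) s hs t ht hst⟩

lemma monotoneOn_of_hasDerivAt_reducedField (hJ : Convex ℝ J) (h0 : IsLeast J 0)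
    (hb : ∀ t ∈ J, HasDerivAt b (reducedField C (b t)) t) (hC : 0 ≤ C) (hb0 : 0 < b 0)
    {ε : ℝ} (hε : ε < 2 / 3) (hCε : C ≤ ε * b 0 ^ 3) : MonotoneOn b J := by
  intro s hs t ht hst
  have hlow : ∀ x ∈ J, b 0 ≤ b x := fun x hx ↦
    le_of_hasDerivAt_reducedField hJ h0 hb hC hb0 (by nlinarith [pow_pos hb0 3]) hx
  have hk : 0 ≤ (1 - ε) * (2 - 3 * ε) / 12 := by nlinarith
  have hsq := (sq_growth_of_hasDerivAt_reducedField hJ h0 hb hC hb0 hε hCε hs ht hst).1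
  refine (pow_le_pow_iff_left₀ (hb0.le.trans (hlow s hs)) (hb0.le.trans (hlow t ht))
    two_ne_zero).mp ?_
  nlinarith [mul_nonneg hk (sub_nonneg.mpr hst)]

lemma tendsto_atTop_of_add_mul_le_sq {b : ℝ → ℝ} {c k : ℝ} (hk : 0 < k)
    (hb : ∀ᶠ t in atTop, 0 ≤ b t ∧ c + k * t ≤ b t ^ 2) : Tendsto b atTop atTop := by
  refine tendsto_atTop_mono' _ (hb.mono fun t ht ↦ (Real.sqrt_le_left ht.1).mpr ht.2)
    (Real.tendsto_sqrt_atTop.comp (tendsto_atTop_add_const_left _ c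
      (tendsto_id.const_mul_atTop hk)))

end ReducedEquation

lemma IsMaxSolution.eq_top_of_monotoneOn {α β : ℝ → ℝ} {T : ℝ≥0∞}
    (hmax : IsMaxSolution α β T) (hβ0 : 0 < β 0) (hmono : MonotoneOn β (domainUpTo T)) {c : ℝ}
    (hgrowth : ∀ t ∈ domainUpTo T, β t ^ 2 ≤ β 0 ^ 2 + c * t) : T = ⊤ := by
  by_contra hT
  have hbdd : BddAbove (β '' domainUpTo T) := by
    refine ⟨√(β 0 ^ 2 + |c| * T.toReal), ?_⟩
    rintro _ ⟨t, ht, rfl⟩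
    have htT := (domainUpTo_of_ne_top hT ▸ ht)
    have hct : c * t ≤ |c| * T.toReal :=
      (mul_le_mul_of_nonneg_right (le_abs_self c) htT.1).trans
        (mul_le_mul_of_nonneg_left htT.2.le (abs_nonneg c))
    exact (le_abs_self _).trans (Real.abs_le_sqrt (by linarith [hgrowth t ht]))
  have hJ := convex_domainUpTo T
  have h0 := isLeast_domainUpTo hmax.1
  have hτ : 0 < T.toReal := ENNReal.toReal_pos hmax.1.ne' hT
  have hIoo : Ioo 0 T.toReal ⊆ domainUpTo T := domainUpTo_of_ne_top hT ▸ Ioo_subset_Ico_self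
  have hIoo_mem : Ioo 0 T.toReal ∈ 𝓝[<] T.toReal := Ioo_mem_nhdsLT hτ
  have hβlim := (hmono.mono hIoo).tendsto_nhdsWithin_Ioo_left (nonempty_Ioo.mpr hτ)
    (hbdd.mono (image_mono hIoo))
  set L := sSup (β '' Ioo 0 T.toReal)
  have hL : β 0 ≤ L := ge_of_tendsto hβlim (eventually_of_mem hIoo_mem fun t ht ↦
    hmono h0.1 (hIoo ht) ht.1.le)
  have hαlim : Tendsto α (𝓝[<] T.toReal) (𝓝 (α 0 * β 0 ^ 2 / L ^ 2)) := by
    refine (tendsto_const_nhds.div (hβlim.pow 2)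
      (pow_ne_zero 2 (hβ0.trans_le hL).ne')).congr' ?_
    filter_upwards [hIoo_mem] with t ht
    exact (hmax.2.1.eq_div_sq hJ h0.1 (hIoo ht)).symm
  exact hmax.not_tendsto_of_ne_top hT (p := (_, L)) (hβ0.trans_le hL).ne'
    (hαlim.prodMk_nhds hβlim)

/-- Instability (case `aμ = 1`, `0 < ε < 2/3`): the maximal solution starting at the
volume-normalized Berger metric, `α(0) = √(c(ε))·ε`, `β(0) = √(c(ε))` with
`c(ε) = (2π²ε)^(-2/3)`, satisfies `α(t) → 0` and `β(t) → ∞` as `t → t_max`. -/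
theorem instability_amu_one (ε : ℝ) (hε0 : 0 < ε) (hε1 : ε < 2/3)
    (α β : ℝ → ℝ) (T : ℝ≥0∞)
    (hmax : IsMaxSolution α β T)
    (hα0 : α 0 = Real.sqrt ((2 * π^2 * ε) ^ (-(2:ℝ)/3)) * ε)
    (hβ0 : β 0 = Real.sqrt ((2 * π^2 * ε) ^ (-(2:ℝ)/3))) :
    Tendsto α (endFilter T) (𝓝 0) ∧ Tendsto β (endFilter T) atTop := by
  have hJ := convex_domainUpTo T
  have h0 := isLeast_domainUpTo hmax.1
  have hβ0pos : 0 < β 0 := hβ0 ▸ Real.sqrt_pos.mpr (Real.rpow_pos_of_pos (by positivity) _)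
  have hCε : α 0 * β 0 ^ 2 = ε * β 0 ^ 3 := by rw [hα0, ← hβ0]; ring
  have hC : 0 ≤ α 0 * β 0 ^ 2 := hCε ▸ by positivity
  have hβ' := fun t ht ↦ hmax.2.1.hasDerivAt_reducedField hJ h0.1 (t := t) ht
  have hgrowth (t : ℝ) (ht : t ∈ domainUpTo T) :=
    sq_growth_of_hasDerivAt_reducedField hJ h0 hβ' hC hβ0pos hε1 hCε.le h0.1 ht (h0.2 ht)
  have hmono := monotoneOn_of_hasDerivAt_reducedField hJ h0 hβ' hC hβ0pos hε1 hCε.le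
  obtain rfl : T = ⊤ := hmax.eq_top_of_monotoneOn hβ0pos hmono (c := 1 / 6) fun t ht ↦ by
    linarith [(hgrowth t ht).2]
  have hJ_top (t : ℝ) (ht : 0 ≤ t) : t ∈ domainUpTo ⊤ := domainUpTo_top ▸ ht
  have hβ_top : Tendsto β atTop atTop := by
    refine tendsto_atTop_of_add_mul_le_sq (c := β 0 ^ 2) (k := (1 - ε) * (2 - 3 * ε) / 12)
      (by nlinarith) ((eventually_ge_atTop 0).mono fun t ht ↦ ⟨?_, ?_⟩)
    · exact hβ0pos.le.trans (hmono h0.1 (hJ_top t ht) ht)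
    · nlinarith [(hgrowth t (hJ_top t ht)).1]
  rw [endFilter, if_pos rfl]
  have hβ_sq : Tendsto (fun t ↦ β t ^ 2) atTop atTop :=
    (tendsto_pow_atTop two_ne_zero).comp hβ_top
  refine ⟨((tendsto_const_nhds (x := α 0 * β 0 ^ 2)).div_atTop hβ_sq).congr' ?_, hβ_top⟩
  filter_upwards [eventually_ge_atTop 0] with t ht
  exact (hmax.2.1.eq_div_sq hJ h0.1 (hJ_top t ht)).symm
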